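/- arXiv:2411.06593 — 7 statements merged into one kernel-verified Lean document; each statement's English description precedes it below -/
import Mathlib

section
/- Let y ∈ ℝⁿ, Z ∈ ℝ^{n×ℓ} with full row rank (rank(Z) = n < ℓ), U ∈ ℝ^{n×r} with full column rank (rank(U) = r < n), and T ∈ ℝ^{n×m} with full column rank (rank(T) = m < n). Let S₁ be the set of minimizers (α, γ, τ) of ‖y − (Zα + Uγ + Tτ)‖₂², S₂ the set of minimizers (α, τ) of ‖y − (Zα + Tτ)‖₂², and S₃ the set of minimizers (Δ, δ) of ‖U − (ZΔ + Tδ)‖_F². Let (α̂, γ̂, τ̂) minimize ‖α‖₂² + ‖γ‖₂² over S₁, let (α̃, τ̃) minimize ‖α‖₂² over S₂, and let (Δ̂, δ̂) minimize ‖Δ‖_F² over S₃. Then α̃ = α̂ + Δ̂ γ̂ and τ̃ = τ̂ + δ̂ γ̂ (Cochran's formula in the high-dimensional partially regularized setting). -/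
open Matrix BigOperators
open Module

noncomputable section

private lemma quad_eq_zero' {d e : ℝ} (he : 0 ≤ e)
    (h : ∀ ε : ℝ, 0 ≤ 2 * ε * d + ε ^ 2 * e) : d = 0 := by
  by_contra hd
  have he1 : (0:ℝ) < e + 1 := by linarith
  have h1 := h (-d / (e + 1))
  have key : 2 * (-d / (e + 1)) * d + (-d / (e + 1)) ^ 2 * e
      = d ^ 2 * (-(e + 2)) / (e + 1) ^ 2 := by
    field_simp
    ring
  rw [key] at h1
  have hd2 : 0 < d ^ 2 := by positivity
  have hneg : d ^ 2 * (-(e + 2)) < 0 := by nlinarith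
  have h2 : (0:ℝ) < (e+1)^2 := by positivity
  have := div_neg_of_neg_of_pos hneg h2
  linarith

private lemma eq_of_sq_sum_le_zero' {ι : Type*} [Fintype ι] {f : ι → ℝ}
    (h : ∑ i, f i ^ 2 ≤ 0) (i : ι) : f i = 0 := by
  have h0 : ∑ i, f i ^ 2 = 0 :=
    le_antisymm h (Finset.sum_nonneg fun i _ => sq_nonneg _)
  have := (Finset.sum_eq_zero_iff_of_nonneg (fun i _ => sq_nonneg (f i))).mp h0 i
    (Finset.mem_univ i)
  exact pow_eq_zero_iff (by norm_num) |>.mp this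

private lemma sum_sq_expand' {ι : Type*} [Fintype ι] (x v : ι → ℝ) (ε : ℝ) :
    ∑ j, (x j + ε * v j) ^ 2
      = ∑ j, x j ^ 2 + 2 * ε * (∑ j, x j * v j) + ε ^ 2 * ∑ j, v j ^ 2 := by
  rw [Finset.mul_sum, Finset.mul_sum, ← Finset.sum_add_distrib, ← Finset.sum_add_distrib]
  exact Finset.sum_congr rfl fun j _ => by ring


/-- Least-squares objective of the long regression of `y` on `[Z, U, T]`. -/
def lsObj1 {n l r m : ℕ} (y : Fin n → ℝ) (Z : Matrix (Fin n) (Fin l) ℝ)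
    (U : Matrix (Fin n) (Fin r) ℝ) (T : Matrix (Fin n) (Fin m) ℝ)
    (a : Fin l → ℝ) (g : Fin r → ℝ) (t : Fin m → ℝ) : ℝ :=
  ∑ i, (y i - (Z *ᵥ a + U *ᵥ g + T *ᵥ t) i) ^ 2

/-- Least-squares objective of the short regression of `y` on `[Z, T]`. -/
def lsObj2 {n l m : ℕ} (y : Fin n → ℝ) (Z : Matrix (Fin n) (Fin l) ℝ)
    (T : Matrix (Fin n) (Fin m) ℝ) (a : Fin l → ℝ) (t : Fin m → ℝ) : ℝ :=
  ∑ i, (y i - (Z *ᵥ a + T *ᵥ t) i) ^ 2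

/-- Frobenius least-squares objective of the regression of `U` on `[Z, T]`. -/
def lsObj3 {n l r m : ℕ} (U : Matrix (Fin n) (Fin r) ℝ) (Z : Matrix (Fin n) (Fin l) ℝ)
    (T : Matrix (Fin n) (Fin m) ℝ) (D : Matrix (Fin l) (Fin r) ℝ)
    (d : Matrix (Fin m) (Fin r) ℝ) : ℝ :=
  ∑ i, ∑ j, (U i j - (Z * D + T * d) i j) ^ 2

theorem cochran_formula
    {n l r m : ℕ}
    (y : Fin n → ℝ)
    (Z : Matrix (Fin n) (Fin l) ℝ) (U : Matrix (Fin n) (Fin r) ℝ)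
    (T : Matrix (Fin n) (Fin m) ℝ)
    (hZ : Z.rank = n) (hnl : n < l)
    (hU : U.rank = r) (hrn : r < n)
    (hT : T.rank = m) (hmn : m < n)
    -- `(αh, γh, τh)` is the partially regularized solution over `S₁`
    (αh : Fin l → ℝ) (γh : Fin r → ℝ) (τh : Fin m → ℝ)
    (hS1 : ∀ (a : Fin l → ℝ) (g : Fin r → ℝ) (t : Fin m → ℝ),
      lsObj1 y Z U T αh γh τh ≤ lsObj1 y Z U T a g t)
    (hmin1 : ∀ (a : Fin l → ℝ) (g : Fin r → ℝ) (t : Fin m → ℝ),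
      (∀ (a' : Fin l → ℝ) (g' : Fin r → ℝ) (t' : Fin m → ℝ),
        lsObj1 y Z U T a g t ≤ lsObj1 y Z U T a' g' t') →
      (∑ j, αh j ^ 2) + (∑ j, γh j ^ 2) ≤ (∑ j, a j ^ 2) + (∑ j, g j ^ 2))
    -- `(αt, τt)` is the partially regularized solution over `S₂`
    (αt : Fin l → ℝ) (τt : Fin m → ℝ)
    (hS2 : ∀ (a : Fin l → ℝ) (t : Fin m → ℝ),
      lsObj2 y Z T αt τt ≤ lsObj2 y Z T a t)
    (hmin2 : ∀ (a : Fin l → ℝ) (t : Fin m → ℝ),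
      (∀ (a' : Fin l → ℝ) (t' : Fin m → ℝ), lsObj2 y Z T a t ≤ lsObj2 y Z T a' t') →
      (∑ j, αt j ^ 2) ≤ (∑ j, a j ^ 2))
    -- `(Δh, δh)` is the partially regularized solution over `S₃`
    (Δh : Matrix (Fin l) (Fin r) ℝ) (δh : Matrix (Fin m) (Fin r) ℝ)
    (hS3 : ∀ (D : Matrix (Fin l) (Fin r) ℝ) (d : Matrix (Fin m) (Fin r) ℝ),
      lsObj3 U Z T Δh δh ≤ lsObj3 U Z T D d)
    (hmin3 : ∀ (D : Matrix (Fin l) (Fin r) ℝ) (d : Matrix (Fin m) (Fin r) ℝ),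
      (∀ (D' : Matrix (Fin l) (Fin r) ℝ) (d' : Matrix (Fin m) (Fin r) ℝ),
        lsObj3 U Z T D d ≤ lsObj3 U Z T D' d') →
      (∑ i, ∑ j, Δh i j ^ 2) ≤ (∑ i, ∑ j, D i j ^ 2)) :
    αt = αh + Δh *ᵥ γh ∧ τt = τh + δh *ᵥ γh := by
  classical
  -- Z is surjective
  have hZsurj : ∀ b : Fin n → ℝ, ∃ a, Z *ᵥ a = b := by
    have htop : LinearMap.range Z.mulVecLin = ⊤ := by
      apply Submodule.eq_top_of_finrank_eq
      rw [show finrank ℝ (LinearMap.range Z.mulVecLin) = Z.rank from rfl, hZ,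
        finrank_fin_fun]
    intro b
    exact LinearMap.range_eq_top.mp htop b
  -- T is injective
  have hTinj : ∀ x : Fin m → ℝ, T *ᵥ x = 0 → x = 0 := by
    have h1 := LinearMap.finrank_range_add_finrank_ker T.mulVecLin
    rw [show finrank ℝ (LinearMap.range T.mulVecLin) = T.rank from rfl, hT,
      finrank_fin_fun] at h1
    have hker : LinearMap.ker T.mulVecLin = ⊥ := Submodule.finrank_eq_zero.mp (by omega)
    intro x hx
    exact (LinearMap.ker_eq_bot.mp hker) (by simpa [Matrix.mulVecLin_apply] using hx)
  -- nonnegativity of objectives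
  have hnn1 : ∀ a g t, 0 ≤ lsObj1 y Z U T a g t := fun a g t =>
    Finset.sum_nonneg fun i _ => sq_nonneg _
  have hnn2 : ∀ a t, 0 ≤ lsObj2 y Z T a t := fun a t =>
    Finset.sum_nonneg fun i _ => sq_nonneg _
  have hnn3 : ∀ D d, 0 ≤ lsObj3 U Z T D d := fun D d =>
    Finset.sum_nonneg fun i _ => Finset.sum_nonneg fun j _ => sq_nonneg _
  obtain ⟨a₀, ha₀⟩ := hZsurj y
  -- the feasibility equations
  have hE1 : Z *ᵥ αh + U *ᵥ γh + T *ᵥ τh = y := by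
    have h0 : lsObj1 y Z U T a₀ 0 0 = 0 := by
      simp [lsObj1, ha₀, Matrix.mulVec_zero]
    have hle := hS1 a₀ 0 0
    rw [h0] at hle
    funext i
    have := eq_of_sq_sum_le_zero' hle i
    linarith [this]
  have hE2 : Z *ᵥ αt + T *ᵥ τt = y := by
    have h0 : lsObj2 y Z T a₀ 0 = 0 := by
      simp [lsObj2, ha₀, Matrix.mulVec_zero]
    have hle := hS2 a₀ 0
    rw [h0] at hle
    funext i
    have := eq_of_sq_sum_le_zero' hle i
    linarith [this]
  have hE3 : Z * Δh + T * δh = U := by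
    choose f hf using fun j => hZsurj (fun i => U i j)
    have h0 : lsObj3 U Z T (Matrix.of fun k j => f j k) 0 = 0 := by
      unfold lsObj3
      apply Finset.sum_eq_zero
      intro i _
      apply Finset.sum_eq_zero
      intro j _
      have := congrFun (hf j) i
      simp only [Matrix.mulVec, dotProduct] at this
      simp [Matrix.mul_apply, this]
    have hle := hS3 (Matrix.of fun k j => f j k) 0
    rw [h0] at hle
    unfold lsObj3 at hle
    ext i j
    have hall : ∀ i' ∈ Finset.univ, (0:ℝ) ≤ ∑ j, (U i' j - (Z * Δh + T * δh) i' j) ^ 2 :=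
      fun i' _ => Finset.sum_nonneg fun j _ => sq_nonneg _
    have hrow : ∑ j, (U i j - (Z * Δh + T * δh) i j) ^ 2 ≤ 0 :=
      le_trans (Finset.single_le_sum hall (Finset.mem_univ i)) hle
    have := eq_of_sq_sum_le_zero' hrow j
    linarith [this]
  -- orthogonality for the short regression solution
  have hO2 : ∀ (v : Fin l → ℝ) (s : Fin m → ℝ), Z *ᵥ v + T *ᵥ s = 0 →
      ∑ j, αt j * v j = 0 := by
    intro v s hvs
    apply quad_eq_zero' (Finset.sum_nonneg fun j _ => sq_nonneg (v j))
    intro ε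
    have hfeas : lsObj2 y Z T (αt + ε • v) (τt + ε • s) = 0 := by
      unfold lsObj2
      have hc : Z *ᵥ (αt + ε • v) + T *ᵥ (τt + ε • s) = y := by
        rw [Matrix.mulVec_add, Matrix.mulVec_add, Matrix.mulVec_smul, Matrix.mulVec_smul]
        funext i
        have h1 := congrFun hE2 i
        have h2 := congrFun hvs i
        simp only [Pi.add_apply, Pi.smul_apply, Pi.zero_apply, smul_eq_mul] at *
        linear_combination h1 + ε * h2
      rw [hc]
      simp
    have hmle := hmin2 (αt + ε • v) (τt + ε • s) (fun a' t' => hfeas ▸ hnn2 a' t')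
    have hexp : ∑ j, (αt + ε • v) j ^ 2
        = ∑ j, αt j ^ 2 + 2 * ε * (∑ j, αt j * v j) + ε ^ 2 * ∑ j, v j ^ 2 := by
      rw [← sum_sq_expand']
      exact Finset.sum_congr rfl fun j _ => by simp
    rw [hexp] at hmle
    linarith
  -- orthogonality for the long regression solution (γ-direction zero)
  have hO1 : ∀ (v : Fin l → ℝ) (s : Fin m → ℝ), Z *ᵥ v + T *ᵥ s = 0 →
      ∑ j, αh j * v j = 0 := by
    intro v s hvs
    apply quad_eq_zero' (Finset.sum_nonneg fun j _ => sq_nonneg (v j))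
    intro ε
    have hfeas : lsObj1 y Z U T (αh + ε • v) γh (τh + ε • s) = 0 := by
      unfold lsObj1
      have hc : Z *ᵥ (αh + ε • v) + U *ᵥ γh + T *ᵥ (τh + ε • s) = y := by
        rw [Matrix.mulVec_add, Matrix.mulVec_add, Matrix.mulVec_smul, Matrix.mulVec_smul]
        funext i
        have h1 := congrFun hE1 i
        have h2 := congrFun hvs i
        simp only [Pi.add_apply, Pi.smul_apply, Pi.zero_apply, smul_eq_mul] at *
        linear_combination h1 + ε * h2
      rw [hc]
      simp
    have hmle := hmin1 (αh + ε • v) γh (τh + ε • s)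
      (fun a' g' t' => hfeas ▸ hnn1 a' g' t')
    have hexp : ∑ j, (αh + ε • v) j ^ 2
        = ∑ j, αh j ^ 2 + 2 * ε * (∑ j, αh j * v j) + ε ^ 2 * ∑ j, v j ^ 2 := by
      rw [← sum_sq_expand']
      exact Finset.sum_congr rfl fun j _ => by simp
    rw [hexp] at hmle
    linarith
  -- orthogonality for the matrix regression solution
  have hO3 : ∀ (v : Fin l → ℝ) (s : Fin m → ℝ), Z *ᵥ v + T *ᵥ s = 0 →
      ∑ j, (Δh *ᵥ γh) j * v j = 0 := by
    intro v s hvs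
    set V : Matrix (Fin l) (Fin r) ℝ := Matrix.of fun i j => v i * γh j with hV
    set W : Matrix (Fin m) (Fin r) ℝ := Matrix.of fun i j => s i * γh j with hW
    have hZVTW : Z * V + T * W = 0 := by
      ext i j
      have h2 := congrFun hvs i
      simp only [Matrix.add_apply, Matrix.zero_apply, Matrix.mul_apply, hV, hW,
        Matrix.of_apply, Pi.add_apply, Pi.zero_apply, Matrix.mulVec, dotProduct] at *
      have e1 : ∑ k, Z i k * (v k * γh j) = (∑ k, Z i k * v k) * γh j := by
        rw [Finset.sum_mul]; exact Finset.sum_congr rfl fun k _ => by ring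
      have e2 : ∑ k, T i k * (s k * γh j) = (∑ k, T i k * s k) * γh j := by
        rw [Finset.sum_mul]; exact Finset.sum_congr rfl fun k _ => by ring
      rw [e1, e2, ← add_mul, h2, zero_mul]
    have hkey : ∑ i, ∑ j, Δh i j * V i j = 0 := by
      apply quad_eq_zero'
        (Finset.sum_nonneg fun i _ => Finset.sum_nonneg fun j _ => sq_nonneg (V i j))
      intro ε
      have hfeas : lsObj3 U Z T (Δh + ε • V) (δh + ε • W) = 0 := by
        unfold lsObj3
        have hc : Z * (Δh + ε • V) + T * (δh + ε • W) = U := by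
          rw [Matrix.mul_add, Matrix.mul_add, Matrix.mul_smul, Matrix.mul_smul]
          calc Z * Δh + ε • (Z * V) + (T * δh + ε • (T * W))
              = (Z * Δh + T * δh) + ε • (Z * V + T * W) := by
                rw [smul_add]; abel
            _ = U := by rw [hE3, hZVTW, smul_zero, add_zero]
        rw [hc]
        simp
      have hmle := hmin3 (Δh + ε • V) (δh + ε • W)
        (fun D' d' => hfeas ▸ hnn3 D' d')
      have hexp : ∑ i, ∑ j, (Δh + ε • V) i j ^ 2
          = (∑ i, ∑ j, Δh i j ^ 2) + 2 * ε * (∑ i, ∑ j, Δh i j * V i j)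
            + ε ^ 2 * ∑ i, ∑ j, V i j ^ 2 := by
        have hrow : ∀ i, ∑ j, (Δh + ε • V) i j ^ 2
            = ∑ j, Δh i j ^ 2 + 2 * ε * (∑ j, Δh i j * V i j)
              + ε ^ 2 * ∑ j, V i j ^ 2 := by
          intro i
          rw [← sum_sq_expand']
          exact Finset.sum_congr rfl fun j _ => by
            simp [Matrix.add_apply, Matrix.smul_apply, smul_eq_mul]
        rw [Finset.sum_congr rfl fun i _ => hrow i, Finset.sum_add_distrib,
          Finset.sum_add_distrib, Finset.mul_sum, Finset.mul_sum]
      rw [hexp] at hmle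
      linarith
    have : ∑ j, (Δh *ᵥ γh) j * v j = ∑ i, ∑ j, Δh i j * V i j := by
      apply Finset.sum_congr rfl
      intro i _
      simp only [Matrix.mulVec, dotProduct, hV, Matrix.of_apply]
      rw [Finset.sum_mul]
      exact Finset.sum_congr rfl fun j _ => by ring
    rw [this, hkey]
  -- combine
  have hkeyU : (Z * Δh) *ᵥ γh + (T * δh) *ᵥ γh = U *ᵥ γh := by
    rw [← Matrix.add_mulVec, hE3]
  set v : Fin l → ℝ := αt - (αh + Δh *ᵥ γh) with hv
  set s : Fin m → ℝ := τt - (τh + δh *ᵥ γh) with hs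
  have hvs : Z *ᵥ v + T *ᵥ s = 0 := by
    funext i
    have e1 := congrFun hE1 i
    have e2 := congrFun hE2 i
    have e3 := congrFun hkeyU i
    simp only [hv, hs, Matrix.mulVec_sub, Matrix.mulVec_add, Matrix.mulVec_mulVec,
      Pi.add_apply, Pi.sub_apply, Pi.zero_apply] at *
    linarith
  have h2 := hO2 v s hvs
  have h1 := hO1 v s hvs
  have h3 := hO3 v s hvs
  have hsum : ∑ j, v j ^ 2 = 0 := by
    have expand : ∀ j, v j ^ 2 = αt j * v j - (αh j * v j + (Δh *ᵥ γh) j * v j) := by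
      intro j
      simp only [hv, Pi.sub_apply, Pi.add_apply]
      ring
    rw [Finset.sum_congr rfl fun j _ => expand j, Finset.sum_sub_distrib,
      Finset.sum_add_distrib, h2, h1, h3]
    ring
  have hveq : v = 0 := funext fun j => eq_of_sq_sum_le_zero' hsum.le j
  have hαt : αt = αh + Δh *ᵥ γh := by
    have := hveq
    rw [hv, sub_eq_zero] at this
    exact this
  refine ⟨hαt, ?_⟩
  have hTs : T *ᵥ s = 0 := by
    rw [hveq, Matrix.mulVec_zero, zero_add] at hvs
    exact hvs
  have := hTinj s hTs
  rw [hs, sub_eq_zero] at this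
  exact this
end
end

section
/- Let y ∈ ℝⁿ, Z ∈ ℝ^{n×ℓ} with full row rank (rank(Z) = n), U ∈ ℝ^{n×r} with full column rank (rank(U) = r < n), and T ∈ ℝ^{n×m} with full column rank (rank(T) = m < n). Let W = [Z, U] ∈ ℝ^{n×(ℓ+r)} be the column-wise concatenation. Define τ̂ = (Tᵀ G_W T)† (Tᵀ G_W y), τ̃ = (Tᵀ G_Z T)† (Tᵀ G_Z y), δ̂ = (Tᵀ G_Z T)† (Tᵀ G_Z U), and γ̂ = Uᵀ G_W (y − T τ̂). Then τ̃ − τ̂ = δ̂ γ̂. -/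
/-!
Since `Z` has full row rank, `Z Zᵀ` and `W Wᵀ = Z Zᵀ + U Uᵀ` are positive definite, so `G_Z`
and `G_W` are honest inverses and the resolvent identity gives `G_Z U Uᵀ G_W = G_Z - G_W`.
Hence `δ̂ γ̂ = (Tᵀ G_Z T)† Tᵀ (G_Z - G_W) (y - T τ̂)`. The `G_W`-part vanishes by the normal
equations `Tᵀ G_W (y - T τ̂) = 0`, and the `G_Z`-part is `τ̃ - (Tᵀ G_Z T)† (Tᵀ G_Z T) τ̂ = τ̃ - τ̂`,
because `τ̂` lies in the range of `Tᵀ`, on which `(Tᵀ G T)† (Tᵀ G T)` is the identity for every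
positive definite `G`: for `P` either of the symmetric projections `(Tᵀ G T)† (Tᵀ G T)` and
`(Tᵀ G T) (Tᵀ G T)†`, the identity `(T (1 - P))ᵀ G (T (1 - P)) = 0` forces `T = T P`.
-/

open Matrix BigOperators

noncomputable section

/-- `B` is the Moore–Penrose pseudoinverse of `A`. -/
def IsMPInv {m n : Type*} [Fintype m] [Fintype n]
    (A : Matrix m n ℝ) (B : Matrix n m ℝ) : Prop :=
  A * B * A = A ∧ B * A * B = B ∧ (A * B)ᵀ = A * B ∧ (B * A)ᵀ = B * A

variable {m n k : Type*} [Fintype m] [Fintype n] [Fintype k]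

theorem posDef_mul_transpose_of_rank_eq_card (Z : Matrix n m ℝ) (hZ : Z.rank = Fintype.card n) :
    (Z * Zᵀ).PosDef := by
  have hrows : LinearIndependent ℝ Z.row := by
    rw [linearIndependent_iff_card_eq_finrank_span, Set.finrank, ← rank_eq_finrank_span_row, hZ]
  simpa using PosDef.mul_conjTranspose_self Z (vecMul_injective_iff.mpr hrows)

theorem Matrix.PosDef.eq_zero_of_transpose_mul_mul_eq_zero {G : Matrix n n ℝ} (hG : G.PosDef)
    {X : Matrix n k ℝ} (h : Xᵀ * G * X = 0) : X = 0 := by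
  classical
  ext i j
  suffices hcol : X *ᵥ Pi.single j 1 = 0 by simpa using congrFun hcol i
  by_contra hne
  have hpos := hG.dotProduct_mulVec_pos hne
  rw [star_trivial, mulVec_mulVec, ← vecMul_transpose, ← dotProduct_mulVec, mulVec_mulVec,
    ← Matrix.mul_assoc, h, zero_mulVec, dotProduct_zero] at hpos
  exact lt_irrefl 0 hpos

theorem mul_transpose_eq_transpose_of_posDef [DecidableEq m] {G : Matrix n n ℝ} (hG : G.PosDef)
    {T : Matrix n m ℝ} {P : Matrix m m ℝ} (hP : Pᵀ = P)
    (h : (1 - P) * (Tᵀ * G * T) * (1 - P) = 0) : P * Tᵀ = Tᵀ := by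
  have hTP : T * (1 - P) = 0 := by
    refine hG.eq_zero_of_transpose_mul_mul_eq_zero ?_
    rw [transpose_mul, transpose_sub, transpose_one, hP]
    simpa only [Matrix.mul_assoc] using h
  have := congrArg transpose hTP
  rw [transpose_mul, transpose_sub, transpose_one, hP, Matrix.sub_mul, Matrix.one_mul,
    transpose_zero, sub_eq_zero] at this
  exact this.symm

namespace IsMPInv

theorem eq_inv [DecidableEq n] {A B : Matrix n n ℝ} (h : IsMPInv A B) (hA : IsUnit A) :
    B = A⁻¹ := by
  have hdet := (isUnit_iff_isUnit_det A).mp hA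
  have hAB : A * B = 1 :=
    calc A * B = A * B * (A * A⁻¹) := by rw [mul_nonsing_inv A hdet, Matrix.mul_one]
      _ = 1 := by rw [← Matrix.mul_assoc, h.1, mul_nonsing_inv A hdet]
  exact (inv_eq_right_inv hAB).symm

theorem eq_transpose_mul {A : Matrix m n ℝ} {B : Matrix n m ℝ} (h : IsMPInv A B) :
    B = Aᵀ * (Bᵀ * B) :=
  calc B = B * A * B := h.2.1.symm
    _ = (B * A)ᵀ * B := by rw [h.2.2.2]
    _ = Aᵀ * (Bᵀ * B) := by rw [transpose_mul, Matrix.mul_assoc]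

section WeightedGram

variable [DecidableEq m] {G : Matrix n n ℝ} {T : Matrix n m ℝ} {B : Matrix m m ℝ}

theorem pinv_mul_mul_transpose (hB : IsMPInv (Tᵀ * G * T) B) (hG : G.PosDef) :
    B * (Tᵀ * G * T) * Tᵀ = Tᵀ :=
  mul_transpose_eq_transpose_of_posDef hG hB.2.2.2 <| by
    have hker : Tᵀ * G * T * (1 - B * (Tᵀ * G * T)) = 0 := by
      rw [Matrix.mul_sub, Matrix.mul_one, ← Matrix.mul_assoc, hB.1, sub_self]
    rw [Matrix.mul_assoc (1 - _), hker, Matrix.mul_zero]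

theorem mul_pinv_mul_transpose (hB : IsMPInv (Tᵀ * G * T) B) (hG : G.PosDef) :
    Tᵀ * G * T * B * Tᵀ = Tᵀ :=
  mul_transpose_eq_transpose_of_posDef hG hB.2.2.1 <| by
    rw [Matrix.sub_mul, Matrix.one_mul, hB.1, sub_self, Matrix.zero_mul]

theorem transpose_mul_mulVec_residual (hB : IsMPInv (Tᵀ * G * T) B) (hG : G.PosDef)
    (y : n → ℝ) : (Tᵀ * G) *ᵥ (y - T *ᵥ (B *ᵥ ((Tᵀ * G) *ᵥ y))) = 0 := by
  rw [mulVec_sub, mulVec_mulVec, mulVec_mulVec, mulVec_mulVec, sub_eq_zero,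
    ← Matrix.mul_assoc, hB.mul_pinv_mul_transpose hG]

theorem pinv_mul_mul_pinv {G' : Matrix n n ℝ} {B' : Matrix m m ℝ}
    (hB : IsMPInv (Tᵀ * G * T) B) (hG : G.PosDef) (hB' : IsMPInv (Tᵀ * G' * T) B') :
    B * (Tᵀ * G * T) * B' = B' :=
  calc B * (Tᵀ * G * T) * B' = B * (Tᵀ * G * T) * Tᵀ * (G'ᵀ * T * (B'ᵀ * B')) := by
        conv_lhs => rw [hB'.eq_transpose_mul]
        simp only [transpose_mul, transpose_transpose, Matrix.mul_assoc]
    _ = B' := by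
        rw [hB.pinv_mul_mul_transpose hG]
        conv_rhs => rw [hB'.eq_transpose_mul]
        simp only [transpose_mul, transpose_transpose, Matrix.mul_assoc]

end WeightedGram

end IsMPInv

theorem cochran_tau_general
    {n l r m : ℕ}
    (y : Fin n → ℝ)
    (Z : Matrix (Fin n) (Fin l) ℝ) (U : Matrix (Fin n) (Fin r) ℝ)
    (T : Matrix (Fin n) (Fin m) ℝ)
    (hZ : Z.rank = n)
    -- `W = [Z, U]` is the column-wise concatenation
    (W : Matrix (Fin n) (Fin l ⊕ Fin r) ℝ) (hW : W = Matrix.fromCols Z U)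
    -- inverse Gram matrices `G_W = (W Wᵀ)†` and `G_Z = (Z Zᵀ)†`
    (GW : Matrix (Fin n) (Fin n) ℝ) (hGW : IsMPInv (W * Wᵀ) GW)
    (GZ : Matrix (Fin n) (Fin n) ℝ) (hGZ : IsMPInv (Z * Zᵀ) GZ)
    (B1 : Matrix (Fin m) (Fin m) ℝ) (hB1 : IsMPInv (Tᵀ * GW * T) B1)
    (B2 : Matrix (Fin m) (Fin m) ℝ) (hB2 : IsMPInv (Tᵀ * GZ * T) B2)
    -- τ̂ = (Tᵀ G_W T)† (Tᵀ G_W y)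
    (τh : Fin m → ℝ) (hτh : τh = B1 *ᵥ ((Tᵀ * GW) *ᵥ y))
    -- τ̃ = (Tᵀ G_Z T)† (Tᵀ G_Z y)
    (τt : Fin m → ℝ) (hτt : τt = B2 *ᵥ ((Tᵀ * GZ) *ᵥ y))
    -- δ̂ = (Tᵀ G_Z T)† (Tᵀ G_Z U)
    (δh : Matrix (Fin m) (Fin r) ℝ) (hδh : δh = B2 * (Tᵀ * GZ * U))
    -- γ̂ = Uᵀ G_W (y − T τ̂)
    (γh : Fin r → ℝ) (hγh : γh = (Uᵀ * GW) *ᵥ (y - T *ᵥ τh)) :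
    τt - τh = δh *ᵥ γh := by
  have hWW : W * Wᵀ = Z * Zᵀ + U * Uᵀ := by
    rw [hW, transpose_fromCols, fromCols_mul_fromRows]
  have hZZ : (Z * Zᵀ).PosDef := posDef_mul_transpose_of_rank_eq_card Z (by simpa using hZ)
  have hWWpos : (W * Wᵀ).PosDef :=
    hWW ▸ hZZ.add_posSemidef (by simpa using posSemidef_self_mul_conjTranspose U)
  obtain rfl := hGZ.eq_inv hZZ.isUnit
  obtain rfl := hGW.eq_inv hWWpos.isUnit
  have hresolvent : (Z * Zᵀ)⁻¹ * (U * Uᵀ) * (W * Wᵀ)⁻¹ = (Z * Zᵀ)⁻¹ - (W * Wᵀ)⁻¹ := by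
    rw [inv_sub_inv (iff_of_true hZZ.isUnit hWWpos.isUnit), hWW, add_sub_cancel_left]
  have hnormal : (Tᵀ * (W * Wᵀ)⁻¹) *ᵥ (y - T *ᵥ τh) = 0 :=
    hτh ▸ hB1.transpose_mul_mulVec_residual hWWpos.inv y
  have hproj : B2 *ᵥ ((Tᵀ * (Z * Zᵀ)⁻¹ * T) *ᵥ τh) = τh := by
    rw [hτh, mulVec_mulVec, mulVec_mulVec, hB2.pinv_mul_mul_pinv hZZ.inv hB1]
  calc τt - τh = B2 *ᵥ ((Tᵀ * (Z * Zᵀ)⁻¹) *ᵥ (y - T *ᵥ τh)) := by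
        rw [hτt, mulVec_sub, mulVec_sub, mulVec_mulVec τh _ T, hproj]
    _ = B2 *ᵥ ((Tᵀ * ((Z * Zᵀ)⁻¹ - (W * Wᵀ)⁻¹)) *ᵥ (y - T *ᵥ τh)) := by
        rw [Matrix.mul_sub, sub_mulVec, hnormal, sub_zero]
    _ = δh *ᵥ γh := by
        rw [← hresolvent, hδh, hγh]
        simp only [mulVec_mulVec, Matrix.mul_assoc]

theorem cochran_tau
    {n l r m : ℕ}
    (y : Fin n → ℝ)
    (Z : Matrix (Fin n) (Fin l) ℝ) (U : Matrix (Fin n) (Fin r) ℝ)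
    (T : Matrix (Fin n) (Fin m) ℝ)
    (hZ : Z.rank = n)
    (hU : U.rank = r) (hrn : r < n)
    (hT : T.rank = m) (hmn : m < n)
    -- `W = [Z, U]` is the column-wise concatenation
    (W : Matrix (Fin n) (Fin l ⊕ Fin r) ℝ) (hW : W = Matrix.fromCols Z U)
    -- inverse Gram matrices `G_W = (W Wᵀ)†` and `G_Z = (Z Zᵀ)†`
    (GW : Matrix (Fin n) (Fin n) ℝ) (hGW : IsMPInv (W * Wᵀ) GW)
    (GZ : Matrix (Fin n) (Fin n) ℝ) (hGZ : IsMPInv (Z * Zᵀ) GZ)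
    (B1 : Matrix (Fin m) (Fin m) ℝ) (hB1 : IsMPInv (Tᵀ * GW * T) B1)
    (B2 : Matrix (Fin m) (Fin m) ℝ) (hB2 : IsMPInv (Tᵀ * GZ * T) B2)
    -- τ̂ = (Tᵀ G_W T)† (Tᵀ G_W y)
    (τh : Fin m → ℝ) (hτh : τh = B1 *ᵥ ((Tᵀ * GW) *ᵥ y))
    -- τ̃ = (Tᵀ G_Z T)† (Tᵀ G_Z y)
    (τt : Fin m → ℝ) (hτt : τt = B2 *ᵥ ((Tᵀ * GZ) *ᵥ y))
    -- δ̂ = (Tᵀ G_Z T)† (Tᵀ G_Z U)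
    (δh : Matrix (Fin m) (Fin r) ℝ) (hδh : δh = B2 * (Tᵀ * GZ * U))
    -- γ̂ = Uᵀ G_W (y − T τ̂)
    (γh : Fin r → ℝ) (hγh : γh = (Uᵀ * GW) *ᵥ (y - T *ᵥ τh)) :
    τt - τh = δh *ᵥ γh :=
  cochran_tau_general y Z U T hZ W hW GW hGW GZ hGZ B1 hB1 B2 hB2 τh hτh τt hτt δh hδh γh hγh
end
end

section
/- Let W ∈ ℝ^{n×q} have full row rank (rank(W) = n < q) and T ∈ ℝ^{n×m} have full column rank (rank(T) = m < n), and let y ∈ ℝⁿ. Define the partially regularized coefficient estimates β̂_W := P_{Wᵀ} P⊥_{W†T} W† y and β̂_{Wᶜ} := (W† T)† W† y. Then β̂_W = Wᵀ G_W (y − T β̂_{Wᶜ}). -/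
open Matrix BigOperators

noncomputable section

/-- Uniqueness of the Moore–Penrose pseudoinverse. -/
lemma IsMPInv.unique {m n : Type*} [Fintype m] [Fintype n]
    {A : Matrix m n ℝ} {B C : Matrix n m ℝ}
    (hB : IsMPInv A B) (hC : IsMPInv A C) : B = C := by
  obtain ⟨hB1, hB2, hB3, hB4⟩ := hB
  obtain ⟨hC1, hC2, hC3, hC4⟩ := hC
  have hAT : Aᵀ = Aᵀ * (A * C) := by
    conv_lhs => rw [← hC1]
    rw [transpose_mul, hC3]
  have hAT2 : Aᵀ = (C * A) * Aᵀ := by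
    conv_lhs => rw [← hC1]
    rw [Matrix.mul_assoc, transpose_mul, hC4]
  have hAB : A * B = A * C := by
    calc A * B = (A * B)ᵀ := hB3.symm
      _ = Bᵀ * Aᵀ := transpose_mul _ _
      _ = Bᵀ * (Aᵀ * (A * C)) := by rw [← hAT]
      _ = (A * B)ᵀ * (A * C) := by rw [transpose_mul, Matrix.mul_assoc]
      _ = A * B * (A * C) := by rw [hB3]
      _ = A * B * A * C := (Matrix.mul_assoc _ _ _).symm
      _ = A * C := by rw [hB1]
  have hBA : B * A = C * A := by
    calc B * A = (B * A)ᵀ := hB4.symm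
      _ = Aᵀ * Bᵀ := transpose_mul _ _
      _ = C * A * Aᵀ * Bᵀ := by rw [← hAT2]
      _ = C * A * (B * A)ᵀ := by rw [Matrix.mul_assoc, ← transpose_mul]
      _ = C * A * (B * A) := by rw [hB4]
      _ = C * (A * (B * A)) := Matrix.mul_assoc _ _ _
      _ = C * (A * B * A) := by rw [Matrix.mul_assoc]
      _ = C * A := by rw [hB1]
  calc B = B * A * B := hB2.symm
    _ = C * A * B := by rw [hBA]
    _ = C * (A * B) := Matrix.mul_assoc _ _ _
    _ = C * (A * C) := by rw [hAB]
    _ = C * A * C := (Matrix.mul_assoc _ _ _).symm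
    _ = C := hC2

theorem fwl_regularized_alt_form
    {n q m : ℕ}
    (y : Fin n → ℝ)
    (W : Matrix (Fin n) (Fin q) ℝ) (T : Matrix (Fin n) (Fin m) ℝ)
    (hW : W.rank = n) (hnq : n < q)
    (hT : T.rank = m) (hmn : m < n)
    -- pseudoinverses: `Wp = W†`, `GW = (W Wᵀ)†`, `K = (W† T)†`
    (Wp : Matrix (Fin q) (Fin n) ℝ) (hWp : IsMPInv W Wp)
    (GW : Matrix (Fin n) (Fin n) ℝ) (hGW : IsMPInv (W * Wᵀ) GW)
    (K : Matrix (Fin m) (Fin q) ℝ) (hK : IsMPInv (Wp * T) K)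
    -- β̂_W = P_{Wᵀ} P⊥_{W†T} W† y, noting P_{Wᵀ} = Wᵀ (Wᵀ)† = Wᵀ (W†)ᵀ
    (βW : Fin q → ℝ)
    (hβW : βW = (Wᵀ * Wpᵀ) *ᵥ
      (((1 : Matrix (Fin q) (Fin q) ℝ) - (Wp * T) * K) *ᵥ (Wp *ᵥ y)))
    -- β̂_{Wᶜ} = (W† T)† W† y
    (βWc : Fin m → ℝ) (hβWc : βWc = K *ᵥ (Wp *ᵥ y)) :
    βW = (Wᵀ * GW) *ᵥ (y - T *ᵥ βWc) := by
  -- W Wᵀ is invertible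
  have hU : IsUnit (W * Wᵀ) := by
    rw [← Matrix.mulVec_surjective_iff_isUnit]
    have hr : (W * Wᵀ).rank = n := by
      rw [Matrix.rank_self_mul_transpose, hW]
    have htop : LinearMap.range (W * Wᵀ).mulVecLin = ⊤ := by
      apply Submodule.eq_top_of_finrank_eq
      rw [← Matrix.rank, hr]
      simp [Module.finrank_pi]
    intro v
    obtain ⟨a, ha⟩ := LinearMap.range_eq_top.mp htop v
    exact ⟨a, by simpa only [Matrix.mulVecLin_apply] using ha⟩
  have hdet : IsUnit (W * Wᵀ).det := (Matrix.isUnit_iff_isUnit_det _).mp hU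
  have h1 := hGW.1
  have h2 : GW * (W * Wᵀ) = 1 := by
    have := congrArg (fun X => (W * Wᵀ)⁻¹ * X) h1
    simpa [← Matrix.mul_assoc, Matrix.nonsing_inv_mul _ hdet] using this
  have hGWinv : GW = (W * Wᵀ)⁻¹ := by
    calc GW = GW * ((W * Wᵀ) * (W * Wᵀ)⁻¹) := by
          rw [Matrix.mul_nonsing_inv _ hdet, Matrix.mul_one]
      _ = (W * Wᵀ)⁻¹ := by rw [← Matrix.mul_assoc, h2, Matrix.one_mul]
  have hGWsymm : GWᵀ = GW := by
    rw [hGWinv, Matrix.transpose_nonsing_inv, transpose_mul, transpose_transpose]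
  have hWWGW : W * (Wᵀ * GW) = 1 := by
    rw [← Matrix.mul_assoc, hGWinv, Matrix.mul_nonsing_inv _ hdet]
  -- Wᵀ GW is a Moore–Penrose pseudoinverse of W, hence equals Wp
  have hMP : IsMPInv W (Wᵀ * GW) := by
    refine ⟨?_, ?_, ?_, ?_⟩
    · rw [hWWGW, Matrix.one_mul]
    · rw [Matrix.mul_assoc, hWWGW, Matrix.mul_one]
    · rw [hWWGW, transpose_one]
    · rw [Matrix.mul_assoc, transpose_mul, transpose_mul, transpose_transpose,
        hGWsymm, Matrix.mul_assoc]
  have hWpEq : Wp = Wᵀ * GW := hWp.unique hMP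
  -- main algebra
  have hWpW : Wᵀ * Wpᵀ = Wp * W := by
    rw [← transpose_mul, hWp.2.2.2]
  have h3 : Wp * W * Wp = Wp := hWp.2.1
  have hkey : Wᵀ * Wpᵀ * ((1 : Matrix (Fin q) (Fin q) ℝ) - (Wp * T) * K) * Wp
      = Wp - Wp * T * K * Wp := by
    rw [hWpW]
    calc Wp * W * ((1 : Matrix (Fin q) (Fin q) ℝ) - Wp * T * K) * Wp
        = (Wp * W - Wp * W * (Wp * T * K)) * Wp := by
          rw [Matrix.mul_sub, Matrix.mul_one]
      _ = Wp * W * Wp - Wp * W * (Wp * T * K) * Wp := Matrix.sub_mul _ _ _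
      _ = Wp - Wp * T * K * Wp := by
          rw [h3]
          congr 1
          simp only [← Matrix.mul_assoc]
          rw [h3]
  rw [hβW, hβWc, ← hWpEq]
  simp only [mulVec_mulVec, ← Matrix.mul_assoc]
  rw [hkey]
  simp only [Matrix.mulVec_sub, Matrix.sub_mulVec, mulVec_mulVec, ← Matrix.mul_assoc]
end
end

section
/- Let W ∈ ℝ^{n×q} have full row rank (rank(W) = n < q) and T ∈ ℝ^{n×m} have full column rank (rank(T) = m < n), and let y ∈ ℝⁿ. Then the partially regularized coefficient estimate of the unpenalized block satisfies (W† T)† W† y = (Tᵀ G_W T)† (Tᵀ G_W y). -/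
open Matrix BigOperators

noncomputable section

lemma mp_unique {p n : Type*} [Fintype p] [Fintype n]
    {A : Matrix p n ℝ} {B B' : Matrix n p ℝ}
    (hB : IsMPInv A B) (hB' : IsMPInv A B') : B = B' := by
  obtain ⟨h1, h2, h3, h4⟩ := hB
  obtain ⟨h1', h2', h3', h4'⟩ := hB'
  have e1 : A * B' * (A * B) = A * B := by rw [← Matrix.mul_assoc, h1']
  have e3 : A * B * (A * B') = A * B' := by rw [← Matrix.mul_assoc, h1]
  have e2 : A * B' * (A * B) = A * B' := by
    calc A * B' * (A * B) = (A * B')ᵀ * (A * B)ᵀ := by rw [h3, h3']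
    _ = ((A * B) * (A * B'))ᵀ := (transpose_mul _ _).symm
    _ = (A * B')ᵀ := by rw [e3]
    _ = A * B' := h3'
  have hAB : A * B = A * B' := e1.symm.trans e2
  have f1 : (B * A) * (B' * A) = B * A := by
    calc (B * A) * (B' * A) = B * (A * B' * A) := by simp only [Matrix.mul_assoc]
    _ = B * A := by rw [h1']
  have g1 : (B' * A) * (B * A) = B' * A := by
    calc (B' * A) * (B * A) = B' * (A * B * A) := by simp only [Matrix.mul_assoc]
    _ = B' * A := by rw [h1]
  have f2 : (B * A) * (B' * A) = B' * A := by
    calc (B * A) * (B' * A) = (B * A)ᵀ * (B' * A)ᵀ := by rw [h4, h4']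
    _ = ((B' * A) * (B * A))ᵀ := (transpose_mul _ _).symm
    _ = (B' * A)ᵀ := by rw [g1]
    _ = B' * A := h4'
  have hBA : B * A = B' * A := f1.symm.trans f2
  calc B = B * A * B := h2.symm
  _ = B' * A * B := by rw [hBA]
  _ = B' * (A * B') := by rw [Matrix.mul_assoc, hAB]
  _ = B' := by rw [← Matrix.mul_assoc, h2']

lemma mp_transpose {p n : Type*} [Fintype p] [Fintype n]
    {A : Matrix p n ℝ} {B : Matrix n p ℝ} (h : IsMPInv A B) : IsMPInv Aᵀ Bᵀ := by
  obtain ⟨h1, h2, h3, h4⟩ := h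
  refine ⟨?_, ?_, ?_, ?_⟩
  · calc Aᵀ * Bᵀ * Aᵀ = (A * (B * A))ᵀ := by simp only [transpose_mul, Matrix.mul_assoc]
    _ = (A * B * A)ᵀ := by rw [Matrix.mul_assoc]
    _ = Aᵀ := by rw [h1]
  · calc Bᵀ * Aᵀ * Bᵀ = (B * (A * B))ᵀ := by simp only [transpose_mul, Matrix.mul_assoc]
    _ = (B * A * B)ᵀ := by rw [Matrix.mul_assoc]
    _ = Bᵀ := by rw [h2]
  · calc (Aᵀ * Bᵀ)ᵀ = B * A := by simp only [transpose_mul, transpose_transpose]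
    _ = (B * A)ᵀ := h4.symm
    _ = Aᵀ * Bᵀ := transpose_mul _ _
  · calc (Bᵀ * Aᵀ)ᵀ = A * B := by simp only [transpose_mul, transpose_transpose]
    _ = (A * B)ᵀ := h3.symm
    _ = Bᵀ * Aᵀ := transpose_mul _ _

lemma transpose_mul_self_eq_zero' {p n : Type*} [Fintype p] [Fintype n]
    {M : Matrix p n ℝ} (h : Mᵀ * M = 0) : M = 0 := by
  have h2 : Mᴴ * M = 0 := by
    have he : Mᴴ = Mᵀ := by ext i j; simp [Matrix.conjTranspose]
    rw [he, h]
  exact Matrix.conjTranspose_mul_self_eq_zero.mp h2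

/-- `(A Aᵀ)† = (A†)ᵀ A†`. -/
lemma mp_gram {p n : Type*} [Fintype p] [Fintype n]
    {A : Matrix p n ℝ} {Ap : Matrix n p ℝ} (h : IsMPInv A Ap) :
    IsMPInv (A * Aᵀ) (Apᵀ * Ap) := by
  obtain ⟨h1, h2, h3, h4⟩ := h
  have f1 : Aᵀ * Apᵀ = Ap * A := by rw [← transpose_mul]; exact h4
  have f2 : Apᵀ * Aᵀ = A * Ap := by rw [← transpose_mul]; exact h3
  have idem : Ap * A * (Ap * A) = Ap * A := by rw [← Matrix.mul_assoc, h2]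
  have s1 : (Ap * A) * Aᵀ = Aᵀ := by
    calc (Ap * A) * Aᵀ = (Ap * A)ᵀ * Aᵀ := by rw [h4]
    _ = (A * (Ap * A))ᵀ := (transpose_mul A (Ap * A)).symm
    _ = (A * Ap * A)ᵀ := by rw [Matrix.mul_assoc]
    _ = Aᵀ := by rw [h1]
  refine ⟨?_, ?_, ?_, ?_⟩
  · calc A * Aᵀ * (Apᵀ * Ap) * (A * Aᵀ)
        = A * ((Aᵀ * Apᵀ) * ((Ap * A) * Aᵀ)) := by simp only [Matrix.mul_assoc]
    _ = A * ((Ap * A) * ((Ap * A) * Aᵀ)) := by rw [f1]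
    _ = A * (Ap * A * (Ap * A)) * Aᵀ := by simp only [Matrix.mul_assoc]
    _ = A * (Ap * A) * Aᵀ := by rw [idem]
    _ = A * Ap * A * Aᵀ := by simp only [Matrix.mul_assoc]
    _ = A * Aᵀ := by rw [h1]
  · calc (Apᵀ * Ap) * (A * Aᵀ) * (Apᵀ * Ap)
        = Apᵀ * ((Ap * A) * ((Aᵀ * Apᵀ) * Ap)) := by simp only [Matrix.mul_assoc]
    _ = Apᵀ * ((Ap * A) * ((Ap * A) * Ap)) := by rw [f1]
    _ = Apᵀ * (Ap * A * Ap * (A * Ap)) := by simp only [Matrix.mul_assoc]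
    _ = Apᵀ * (Ap * (A * Ap)) := by rw [h2]
    _ = Apᵀ * (Ap * A * Ap) := by simp only [Matrix.mul_assoc]
    _ = Apᵀ * Ap := by rw [h2]
  · have e : (A * Aᵀ) * (Apᵀ * Ap) = A * Ap := by
      calc (A * Aᵀ) * (Apᵀ * Ap) = A * ((Aᵀ * Apᵀ) * Ap) := by simp only [Matrix.mul_assoc]
      _ = A * (Ap * A * Ap) := by rw [f1]
      _ = A * Ap := by rw [h2]
    rw [e]; exact h3
  · have e : (Apᵀ * Ap) * (A * Aᵀ) = A * Ap := by
      calc (Apᵀ * Ap) * (A * Aᵀ) = Apᵀ * ((Ap * A) * Aᵀ) := by simp only [Matrix.mul_assoc]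
      _ = Apᵀ * Aᵀ := by rw [s1]
      _ = A * Ap := f2
    rw [e]; exact h3

/-- `A† = (Aᵀ A)† Aᵀ`. -/
lemma mp_of_gram {p n : Type*} [Fintype p] [Fintype n]
    {A : Matrix p n ℝ} {B : Matrix n n ℝ} (hB : IsMPInv (Aᵀ * A) B) :
    IsMPInv A (B * Aᵀ) := by
  obtain ⟨h1, h2, h3, h4⟩ := hB
  set C := Aᵀ * A with hC
  have Csym : Cᵀ = C := by rw [hC, transpose_mul, transpose_transpose]
  have Bsym : Bᵀ = B := by
    have ht : IsMPInv Cᵀ Bᵀ := mp_transpose ⟨h1, h2, h3, h4⟩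
    rw [Csym] at ht
    exact mp_unique ht ⟨h1, h2, h3, h4⟩
  have hCP : C * (B * C) = C := by rw [← Matrix.mul_assoc, h1]
  have hPC : (B * C) * C = C := by
    have hT : ((B * C) * C)ᵀ = C := by rw [transpose_mul, h4, Csym, hCP]
    calc (B * C) * C = (((B * C) * C)ᵀ)ᵀ := (transpose_transpose _).symm
    _ = Cᵀ := by rw [hT]
    _ = C := Csym
  have key : A * (B * C) = A := by
    set M := A - A * (B * C) with hM
    have hMt : Mᵀ = Aᵀ - (B * C) * Aᵀ := by rw [hM, transpose_sub, transpose_mul, h4]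
    have t1 : Aᵀ * (A * (B * C)) = C := by rw [← Matrix.mul_assoc, ← hC, hCP]
    have t2 : ((B * C) * Aᵀ) * A = C := by rw [Matrix.mul_assoc, ← hC, hPC]
    have t3 : ((B * C) * Aᵀ) * (A * (B * C)) = C := by
      rw [← Matrix.mul_assoc, t2, hCP]
    have hMM : Mᵀ * M = 0 := by
      rw [hMt, hM, Matrix.sub_mul, Matrix.mul_sub, Matrix.mul_sub, ← hC, t1, t2, t3]
      simp
    have : M = 0 := transpose_mul_self_eq_zero' hMM
    have := sub_eq_zero.mp (hM ▸ this)
    exact this.symm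
  refine ⟨?_, ?_, ?_, ?_⟩
  · rw [Matrix.mul_assoc, Matrix.mul_assoc, ← hC]; exact key
  · rw [Matrix.mul_assoc B Aᵀ A, ← hC, ← Matrix.mul_assoc, h2]
  · rw [transpose_mul, transpose_mul, transpose_transpose, Bsym, Matrix.mul_assoc]
  · have e : (B * Aᵀ) * A = B * C := by rw [Matrix.mul_assoc, ← hC]
    rw [e]; exact h4

theorem unpenalized_block_gls_form
    {n q m : ℕ}
    (y : Fin n → ℝ)
    (W : Matrix (Fin n) (Fin q) ℝ) (T : Matrix (Fin n) (Fin m) ℝ)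
    (hW : W.rank = n) (hnq : n < q)
    (hT : T.rank = m) (hmn : m < n)
    -- pseudoinverses: `Wp = W†`, `GW = (W Wᵀ)†`, `K = (W† T)†`, `B = (Tᵀ G_W T)†`
    (Wp : Matrix (Fin q) (Fin n) ℝ) (hWp : IsMPInv W Wp)
    (GW : Matrix (Fin n) (Fin n) ℝ) (hGW : IsMPInv (W * Wᵀ) GW)
    (K : Matrix (Fin m) (Fin q) ℝ) (hK : IsMPInv (Wp * T) K)
    (B : Matrix (Fin m) (Fin m) ℝ) (hB : IsMPInv (Tᵀ * GW * T) B) :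
    K *ᵥ (Wp *ᵥ y) = B *ᵥ ((Tᵀ * GW) *ᵥ y) := by
  have hGWeq : GW = Wpᵀ * Wp := mp_unique hGW (mp_gram hWp)
  have hCeq : Tᵀ * GW * T = (Wp * T)ᵀ * (Wp * T) := by
    rw [hGWeq, transpose_mul]
    simp only [Matrix.mul_assoc]
  have hB' : IsMPInv ((Wp * T)ᵀ * (Wp * T)) B := hCeq ▸ hB
  have hKeq : K = B * (Wp * T)ᵀ := mp_unique hK (mp_of_gram hB')
  have hmain : K * Wp = B * (Tᵀ * GW) := by
    rw [hKeq, hGWeq, transpose_mul]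
    simp only [Matrix.mul_assoc]
  rw [Matrix.mulVec_mulVec, Matrix.mulVec_mulVec, hmain]
end
end

section
/- Let X ∈ ℝ^{n×p} have full row rank (rank(X) = n), let i ∈ {1,…,n}, and let X_{∼i} ∈ ℝ^{(n−1)×p} be X with its i-th row removed. Then [(X_{∼i})ᵀ X_{∼i}]† = X† { I_n − (e_i e_iᵀ G_X)/(e_iᵀ G_X e_i) − (G_X e_i e_iᵀ)/(e_iᵀ G_X e_i) + (e_iᵀ G_X² e_i)/(e_iᵀ G_X e_i)² · e_i e_iᵀ } (X†)ᵀ. -/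
/-!
Deleting row `i` of `X` gives the same Gram matrix as zeroing it: `X_{∼i}ᵀ X_{∼i} = Zᵀ Z` with
`Z = (I - E) X`, `E = e_i e_iᵀ`, and `(Zᵀ Z)† = Z† Z†ᵀ`. As `X Xᵀ` is invertible with inverse `G`,
`X† = Xᵀ G`, and `Z† = Xᵀ G R` for the oblique projection `R = I - E G / G_ii`, which satisfies
`(I - E) R = I - E` and `R (I - E) = R` because `E G E = G_ii E`. The bracket of the theorem is `R Rᵀ`.
-/

open Matrix BigOperators

noncomputable section

/-- Remove the `i`-th row of a matrix. -/
def dropRow {n q : ℕ} (A : Matrix (Fin (n + 1)) (Fin q) ℝ) (i : Fin (n + 1)) :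
    Matrix (Fin n) (Fin q) ℝ :=
  Matrix.of fun j k => A (i.succAbove j) k

namespace IsMPInv

variable {m n : Type*} [Fintype m] [Fintype n] {A : Matrix m n ℝ} {B C : Matrix n m ℝ}

theorem unique_s6 (hB : IsMPInv A B) (hC : IsMPInv A C) : B = C := by
  obtain ⟨hB₁, hB₂, hB₃, hB₄⟩ := hB
  obtain ⟨hC₁, hC₂, hC₃, hC₄⟩ := hC
  have hAB : A * B = A * C := calc
    A * B = (A * C * (A * B))ᵀ := by rw [← Matrix.mul_assoc, hC₁, hB₃]
    _ = A * B * (A * C) := by rw [transpose_mul, hB₃, hC₃]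
    _ = A * C := by rw [← Matrix.mul_assoc, hB₁]
  have hBA : B * A = C * A := calc
    B * A = (C * A * (B * A))ᵀ := by
      rw [transpose_mul, hB₄, hC₄, Matrix.mul_assoc, ← Matrix.mul_assoc A C A, hC₁]
    _ = C * A := by rw [Matrix.mul_assoc C, ← Matrix.mul_assoc A, hB₁, hC₄]
  rw [← hB₂, hBA, Matrix.mul_assoc, hAB, ← Matrix.mul_assoc, hC₂]

theorem transpose_mul_self (h : IsMPInv A B) : IsMPInv (Aᵀ * A) (B * Bᵀ) := by
  obtain ⟨h₁, h₂, h₃, h₄⟩ := h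
  have hleft : Aᵀ * A * (B * Bᵀ) = B * A := calc
    Aᵀ * A * (B * Bᵀ) = (B * (A * B) * A)ᵀ := by
      rw [transpose_mul, transpose_mul, h₃]; simp only [Matrix.mul_assoc]
    _ = B * A := by rw [← Matrix.mul_assoc, h₂, h₄]
  have hright : B * Bᵀ * (Aᵀ * A) = B * A := calc
    B * Bᵀ * (Aᵀ * A) = B * (A * B)ᵀ * A := by rw [transpose_mul]; simp only [Matrix.mul_assoc]
    _ = B * A := by rw [h₃, ← Matrix.mul_assoc, h₂]
  refine ⟨?_, ?_, ?_, ?_⟩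
  · calc Aᵀ * A * (B * Bᵀ) * (Aᵀ * A) = (B * A)ᵀ * (Aᵀ * A) := by rw [hleft, h₄]
      _ = (A * B * A)ᵀ * A := by simp only [transpose_mul, Matrix.mul_assoc]
      _ = Aᵀ * A := by rw [h₁]
  · rw [hright, ← Matrix.mul_assoc, h₂]
  · rw [hleft, h₄]
  · rw [hright, h₄]

theorem eq_nonsing_inv [DecidableEq n] {S G : Matrix n n ℝ} (h : IsMPInv S G) (hS : IsUnit S) :
    G = S⁻¹ := by
  have hdet := (isUnit_iff_isUnit_det S).mp hS
  calc G = S⁻¹ * (S * G * S * S⁻¹) := by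
        rw [mul_nonsing_inv_cancel_right _ _ hdet, nonsing_inv_mul_cancel_left _ _ hdet]
    _ = S⁻¹ := by rw [h.1, mul_nonsing_inv _ hdet, mul_one]

end IsMPInv

theorem Matrix.isUnit_of_rank_eq_card {n K : Type*} [Fintype n] [DecidableEq n] [Field K]
    {S : Matrix n n K} (h : S.rank = Fintype.card n) : IsUnit S := by
  have hrange : LinearMap.range S.mulVecLin = ⊤ :=
    Submodule.eq_top_of_finrank_eq (h.trans (Module.finrank_fintype_fun_eq_card K).symm)
  exact mulVec_surjective_iff_isUnit.mp (LinearMap.range_eq_top.mp hrange)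

section RightInverse

variable {m n : Type*} [Fintype m] [Fintype n] [DecidableEq m] {X : Matrix m n ℝ}
  {G P R : Matrix m m ℝ}

theorem isMPInv_mul_transpose_mul_mul (hXG : X * Xᵀ * G = 1) (hP : Pᵀ = P) (hPR : P * R = P)
    (hRP : R * P = R) (hGR : (G * R)ᵀ = G * R) : IsMPInv (P * X) (Xᵀ * G * R) := by
  have hPP : P * P = P := calc
    P * P = P * R * P := by rw [hPR]
    _ = P := by rw [Matrix.mul_assoc, hRP, hPR]
  have hRR : R * R = R := calc
    R * R = R * P * R := by rw [hRP]
    _ = R := by rw [Matrix.mul_assoc, hPR, hRP]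
  have hZW : P * X * (Xᵀ * G * R) = P := calc
    P * X * (Xᵀ * G * R) = P * (X * Xᵀ * G) * R := by simp only [Matrix.mul_assoc]
    _ = P := by rw [hXG, mul_one, hPR]
  have hWZ : Xᵀ * G * R * (P * X) = Xᵀ * (G * R) * X := by
    rw [← Matrix.mul_assoc, Matrix.mul_assoc _ R P, hRP, Matrix.mul_assoc Xᵀ]
  refine ⟨?_, ?_, ?_, ?_⟩
  · rw [hZW, ← Matrix.mul_assoc, hPP]
  · calc Xᵀ * G * R * (P * X) * (Xᵀ * G * R) = Xᵀ * G * (R * (X * Xᵀ * G) * R) := by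
          rw [hWZ]; simp only [Matrix.mul_assoc]
      _ = Xᵀ * G * R := by rw [hXG, mul_one, hRR]
  · rw [hZW, hP]
  · rw [hWZ, transpose_mul, transpose_mul, transpose_transpose, hGR]
    simp only [Matrix.mul_assoc]

theorem isMPInv_transpose_mul (hXG : X * Xᵀ * G = 1) (hG : Gᵀ = G) : IsMPInv X (Xᵀ * G) := by
  simpa using isMPInv_mul_transpose_mul_mul (P := 1) (R := 1) hXG (by simp) (by simp) (by simp)
    (by simpa)

theorem isMPInv_one_sub_single_mul (hXG : X * Xᵀ * G = 1) (hG : Gᵀ = G) {i : m}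
    (hg : G i i ≠ 0) :
    IsMPInv ((1 - single i i 1 : Matrix m m ℝ) * X)
      (Xᵀ * G * (1 - (G i i)⁻¹ • (single i i 1 * G))) := by
  set E : Matrix m m ℝ := single i i 1
  have hEE : E * E = E := by simp [E]
  have hEGE : E * G * E = G i i • E := by simp [E, smul_single]
  refine isMPInv_mul_transpose_mul_mul hXG (by simp [E]) ?_ ?_ ?_
  · simp only [mul_sub, sub_mul, mul_one, one_mul, mul_smul_comm, ← Matrix.mul_assoc, hEE,
      sub_self, smul_zero, sub_zero]
  · simp only [mul_sub, sub_mul, mul_one, one_mul, smul_mul_assoc, hEGE, smul_smul,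
      inv_mul_cancel₀ hg, one_smul]
    abel
  · simp [mul_sub, transpose_mul, hG, E, Matrix.mul_assoc]

end RightInverse

section RankOne

variable {m n : Type*} [Fintype m] [DecidableEq m]

theorem Matrix.one_sub_single_mul_eq_updateRow (A : Matrix m n ℝ) (i : m) :
    (1 - single i i 1 : Matrix m m ℝ) * A = A.updateRow i 0 := by
  rw [Matrix.sub_mul, Matrix.one_mul]
  ext j k
  by_cases hj : j = i
  · subst hj; simp
  · simp [hj]

theorem Matrix.single_mul_eq_vecMulVec (G : Matrix m m ℝ) (i : m) :
    single i i 1 * G = vecMulVec (Pi.single i 1) (G i) := by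
  ext a b; by_cases h : a = i <;> simp [h, vecMulVec_apply]

theorem Matrix.mul_single_eq_vecMulVec (G : Matrix m m ℝ) (i : m) :
    G * single i i 1 = vecMulVec (fun j => G j i) (Pi.single i 1) := by
  ext a b; by_cases h : b = i <;> simp [h, vecMulVec_apply]

theorem one_sub_inv_smul_single_mul_mul_transpose {G : Matrix m m ℝ} (hG : Gᵀ = G) (i : m) :
    (1 - (G i i)⁻¹ • (single i i 1 * G)) * (1 - (G i i)⁻¹ • (single i i 1 * G))ᵀ
      = 1 - (G i i)⁻¹ • vecMulVec (Pi.single i 1) (G i)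
        - (G i i)⁻¹ • vecMulVec (fun j => G j i) (Pi.single i 1)
        + ((G * G) i i / (G i i) ^ 2) • vecMulVec (Pi.single i 1) (Pi.single i 1) := by
  have hEGGE : single i i 1 * G * (G * single i i 1) = (G * G) i i • single i i (1 : ℝ) := by
    rw [← Matrix.mul_assoc, Matrix.mul_assoc _ G G, single_mul_mul_single, smul_single]; simp
  simp only [transpose_sub, transpose_one, transpose_smul, transpose_mul, hG, transpose_single]
  simp only [mul_sub, sub_mul, mul_one, one_mul, smul_mul_smul_comm, hEGGE]
  rw [single_mul_eq_vecMulVec, mul_single_eq_vecMulVec, single_eq_single_vecMulVec_single]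
  module

end RankOne

theorem transpose_dropRow_mul_dropRow {n q : ℕ} (A : Matrix (Fin (n + 1)) (Fin q) ℝ)
    (i : Fin (n + 1)) :
    (dropRow A i)ᵀ * dropRow A i = (A.updateRow i 0)ᵀ * A.updateRow i 0 := by
  ext a b
  simp [mul_apply, Fin.sum_univ_succAbove _ i, dropRow, updateRow_apply]

theorem loo_gram_pseudoinverse
    {n p : ℕ}
    (X : Matrix (Fin (n + 1)) (Fin p) ℝ) (hX : X.rank = n + 1)
    (i : Fin (n + 1))
    (Xp : Matrix (Fin p) (Fin (n + 1)) ℝ) (hXp : IsMPInv X Xp)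
    (GX : Matrix (Fin (n + 1)) (Fin (n + 1)) ℝ) (hGX : IsMPInv (X * Xᵀ) GX)
    (B : Matrix (Fin p) (Fin p) ℝ)
    (hB : IsMPInv ((dropRow X i)ᵀ * dropRow X i) B) :
    B = Xp *
        ((1 : Matrix (Fin (n + 1)) (Fin (n + 1)) ℝ)
          - (GX i i)⁻¹ • vecMulVec (Pi.single i 1 : Fin (n + 1) → ℝ) (GX i)
          - (GX i i)⁻¹ • vecMulVec (fun j => GX j i) (Pi.single i 1 : Fin (n + 1) → ℝ)
          + (((GX * GX) i i) / (GX i i) ^ 2) •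
              vecMulVec (Pi.single i 1 : Fin (n + 1) → ℝ) (Pi.single i 1 : Fin (n + 1) → ℝ))
        * Xpᵀ := by
  have hS : IsUnit (X * Xᵀ) :=
    isUnit_of_rank_eq_card (by rw [rank_self_mul_transpose, hX, Fintype.card_fin])
  have hGX_eq : GX = (X * Xᵀ)⁻¹ := hGX.eq_nonsing_inv hS
  have hXG : X * Xᵀ * GX = 1 := hGX_eq ▸ mul_nonsing_inv _ ((isUnit_iff_isUnit_det _).mp hS)
  have hG : GXᵀ = GX := by rw [hGX_eq, transpose_nonsing_inv, transpose_mul, transpose_transpose]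
  have hg : GX i i ≠ 0 := by
    have hPD : (X * Xᵀ).PosDef := (posSemidef_self_mul_conjTranspose X).posDef_iff_isUnit.mpr hS
    exact (hGX_eq ▸ hPD.inv).diag_pos.ne'
  obtain rfl : Xp = Xᵀ * GX := hXp.unique_s6 (isMPInv_transpose_mul hXG hG)
  rw [transpose_dropRow_mul_dropRow, ← one_sub_single_mul_eq_updateRow] at hB
  rw [hB.unique_s6 (isMPInv_one_sub_single_mul hXG hG hg).transpose_mul_self,
    ← one_sub_inv_smul_single_mul_mul_transpose hG i]
  simp only [transpose_mul, hG, Matrix.mul_assoc]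
end
end

section
/- Let W ∈ ℝ^{n×q} have full row rank (rank(W) = n < q), let i ∈ {1,…,n}, and let W_{∼i} ∈ ℝ^{(n−1)×q} be W with its i-th row removed. Define P_i = (W† e_i e_iᵀ W†ᵀ)/(e_iᵀ G_W e_i) ∈ ℝ^{q×q}. Then (W_{∼i})† W_{∼i} = (I_q − P_i) W† W. -/
open Matrix BigOperators

noncomputable section

/-! `W†W` and `W_{∼i}†W_{∼i}` are the orthogonal projections onto the row spaces of `W`
and `W_{∼i}`, and `P_i` is the orthogonal projection onto the line through `v = W† e_i`;
indeed `G_W = W†ᵀW†`, so `e_iᵀ G_W e_i = ‖v‖²`. Since `W v = e_i`, the vector `v` lies in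
the row space of `W` and is orthogonal to every row of `W_{∼i}`, so
`W†W - P_i - W_{∼i}†W_{∼i}` is again an orthogonal projection. Full row rank makes the three
traces `n + 1`, `1` and `n`, so this projection has trace zero and therefore vanishes. -/

namespace Matrix

theorem isUnit_of_rank_eq_card_s9 {K m : Type*} [Field K] [Fintype m] [DecidableEq m]
    {M : Matrix m m K} (h : M.rank = Fintype.card m) : IsUnit M := by
  rw [← mulVec_surjective_iff_isUnit]
  change Function.Surjective M.mulVecLin
  rw [← LinearMap.range_eq_top]
  apply Submodule.eq_top_of_finrank_eq
  rwa [Module.finrank_fintype_fun_eq_card]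

theorem exists_mul_eq_one_of_rank_eq_card {K m k : Type*} [Field K] [LinearOrder K]
    [IsStrictOrderedRing K] [Fintype m] [Fintype k] [DecidableEq m] {A : Matrix m k K}
    (h : A.rank = Fintype.card m) : ∃ X : Matrix k m K, A * X = 1 := by
  have hG : IsUnit (A * Aᵀ).det :=
    (isUnit_iff_isUnit_det _).mp (isUnit_of_rank_eq_card_s9 (by rwa [rank_self_mul_transpose]))
  exact ⟨Aᵀ * (A * Aᵀ)⁻¹, by rw [← Matrix.mul_assoc, mul_nonsing_inv _ hG]⟩

theorem submatrix_mul_submatrix_eq_one {R l m k : Type*} [CommSemiring R] [Fintype k]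
    [DecidableEq l] [DecidableEq m] {A : Matrix m k R} {X : Matrix k m R} (h : A * X = 1)
    {f : l → m} (hf : Function.Injective f) : A.submatrix f id * X.submatrix id f = 1 := by
  rw [← submatrix_mul _ _ _ _ _ Function.bijective_id, h, submatrix_one _ hf]

theorem trace_mul_eq_card_of_mul_eq_one {R m k : Type*} [CommSemiring R] [Fintype m]
    [Fintype k] [DecidableEq m] {A : Matrix m k R} {B : Matrix k m R} (h : A * B = 1) :
    trace (B * A) = Fintype.card m := by
  rw [trace_mul_comm, h, trace_one]

def lineProjection {n : Type*} [Fintype n] (v : n → ℝ) : Matrix n n ℝ :=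
  (v ⬝ᵥ v)⁻¹ • vecMulVec v v

section lineProjection

variable {n : Type*} [Fintype n] {v : n → ℝ}

theorem isStarProjection_lineProjection (hv : v ≠ 0) : IsStarProjection (lineProjection v) := by
  have hvv : v ⬝ᵥ v ≠ 0 := fun h => hv (dotProduct_self_eq_zero.mp h)
  refine ⟨?_, ?_⟩
  · rw [IsIdempotentElem, lineProjection, smul_mul_smul, vecMulVec_mul_vecMulVec, vecMulVec_smul,
      smul_smul, mul_assoc, inv_mul_cancel₀ hvv, mul_one]
  · rw [IsSelfAdjoint, star_eq_conjTranspose, conjTranspose_eq_transpose_of_trivial,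
      lineProjection, transpose_smul, transpose_vecMulVec]

theorem trace_lineProjection (hv : v ≠ 0) : trace (lineProjection v) = 1 := by
  rw [lineProjection, trace_smul, trace_vecMulVec, smul_eq_mul,
    inv_mul_cancel₀ (fun h => hv (dotProduct_self_eq_zero.mp h))]

theorem mul_lineProjection_of_mulVec_eq_self {M : Matrix n n ℝ} (h : M *ᵥ v = v) :
    M * lineProjection v = lineProjection v := by
  rw [lineProjection, Matrix.mul_smul, mul_vecMulVec, h]

theorem mul_lineProjection_of_mulVec_eq_zero {M : Matrix n n ℝ} (h : M *ᵥ v = 0) :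
    M * lineProjection v = 0 := by
  rw [lineProjection, Matrix.mul_smul, mul_vecMulVec, h, zero_vecMulVec, smul_zero]

end lineProjection

end Matrix

namespace IsStarProjection

open scoped ComplexOrder in
theorem eq_zero_of_trace_eq_zero {𝕜 n : Type*} [RCLike 𝕜] [Fintype n]
    {R : Matrix n n 𝕜} (hR : IsStarProjection R) (h : trace R = 0) : R = 0 := by
  have hpsd : R.PosSemidef := by
    have hR' : R = Rᴴ * R := by
      rw [← star_eq_conjTranspose, hR.isSelfAdjoint, hR.isIdempotentElem]
    rw [hR']
    exact posSemidef_conjTranspose_mul_self R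
  exact hpsd.trace_eq_zero_iff.mp h

theorem eq_sub_of_trace_eq {𝕜 n : Type*} [RCLike 𝕜] [Fintype n]
    {J K L : Matrix n n 𝕜} (hJ : IsStarProjection J) (hK : IsStarProjection K)
    (hL : IsStarProjection L) (hJL : J * L = L) (hKJ : K * J = K) (hKL : K * L = 0)
    (htr : trace J = trace K + trace L) : K = J - L := by
  have hR : IsStarProjection (J - L - K) := hK.sub_of_mul_eq_left
    (hL.sub_of_mul_eq_right hJ hJL) (by rw [Matrix.mul_sub, hKJ, hKL, sub_zero])
  have hR0 := hR.eq_zero_of_trace_eq_zero (by rw [trace_sub, trace_sub, htr]; ring)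
  exact (sub_eq_zero.mp hR0).symm

end IsStarProjection

namespace IsMPInv

variable {m k : Type*} [Fintype m] [Fintype k] {A : Matrix m k ℝ} {B : Matrix k m ℝ}

theorem mul_eq_one_of_mul_eq_one [DecidableEq m] (h : IsMPInv A B) {X : Matrix k m ℝ}
    (hX : A * X = 1) : A * B = 1 :=
  calc A * B = A * B * (A * X) := by rw [hX, Matrix.mul_one]
    _ = A * X := by rw [← Matrix.mul_assoc, h.1]
    _ = 1 := hX

theorem isStarProjection_mul (h : IsMPInv A B) : IsStarProjection (B * A) where
  isIdempotentElem := by rw [IsIdempotentElem, ← Matrix.mul_assoc, h.2.1]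
  isSelfAdjoint := by
    rw [IsSelfAdjoint, star_eq_conjTranspose, conjTranspose_eq_transpose_of_trivial, h.2.2.2]

theorem transpose_mul_self_mul_eq_one [DecidableEq m] (h : IsMPInv A B) (hAB : A * B = 1) :
    Bᵀ * B * (A * Aᵀ) = 1 :=
  calc Bᵀ * B * (A * Aᵀ) = Bᵀ * ((B * A)ᵀ * Aᵀ) := by
        rw [h.2.2.2]; simp only [Matrix.mul_assoc]
    _ = (A * B)ᵀ := by rw [← transpose_mul, ← Matrix.mul_assoc, h.1, transpose_mul]
    _ = 1 := by rw [hAB, transpose_one]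

theorem mul_eq_one_of_rank_eq_card [DecidableEq m] (h : IsMPInv A B)
    (hA : A.rank = Fintype.card m) : A * B = 1 :=
  let ⟨_, hX⟩ := exists_mul_eq_one_of_rank_eq_card hA
  h.mul_eq_one_of_mul_eq_one hX

theorem eq_of_mul_eq_one [DecidableEq m] {S G T : Matrix m m ℝ} (h : IsMPInv S G)
    (hT : T * S = 1) : G = T := by
  have hGS : G * S = 1 :=
    calc G * S = T * (S * G * S) := by
          rw [← Matrix.mul_assoc, ← Matrix.mul_assoc, hT, Matrix.one_mul]
      _ = 1 := by rw [h.1, hT]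
  rw [← inv_eq_left_inv hGS, inv_eq_left_inv hT]

end IsMPInv

section dropRow

variable {n q : ℕ} {A : Matrix (Fin (n + 1)) (Fin q) ℝ} {i : Fin (n + 1)}

theorem dropRow_mul_of_mul_eq_self {M : Matrix (Fin q) (Fin q) ℝ} (h : A * M = A) :
    dropRow A i * M = dropRow A i :=
  calc dropRow A i * M = dropRow (A * M) i := rfl
    _ = dropRow A i := by rw [h]

theorem dropRow_mul_submatrix_eq_one {X : Matrix (Fin q) (Fin (n + 1)) ℝ} (h : A * X = 1) :
    dropRow A i * X.submatrix id i.succAbove = 1 :=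
  submatrix_mul_submatrix_eq_one h Fin.succAbove_right_injective

theorem dropRow_mulVec_eq_zero {v : Fin q → ℝ} {c : ℝ} (h : A *ᵥ v = Pi.single i c) :
    dropRow A i *ᵥ v = 0 := by
  ext j
  have hj := congr_fun h (i.succAbove j)
  rwa [Pi.single_eq_of_ne (Fin.succAbove_ne i j)] at hj

end dropRow

theorem loo_row_space_projection_general
    {n q : ℕ}
    (W : Matrix (Fin (n + 1)) (Fin q) ℝ) (hW : W.rank = n + 1)
    (i : Fin (n + 1))
    (Wp : Matrix (Fin q) (Fin (n + 1)) ℝ) (hWp : IsMPInv W Wp)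
    (GW : Matrix (Fin (n + 1)) (Fin (n + 1)) ℝ) (hGW : IsMPInv (W * Wᵀ) GW)
    (Wdp : Matrix (Fin q) (Fin n) ℝ) (hWdp : IsMPInv (dropRow W i) Wdp)
    -- `P_i = (W† e_i e_iᵀ W†ᵀ)/(e_iᵀ G_W e_i)`
    (P : Matrix (Fin q) (Fin q) ℝ)
    (hP : P = (GW i i)⁻¹ • vecMulVec (Wpᵀ i) (Wpᵀ i)) :
    Wdp * dropRow W i = ((1 : Matrix (Fin q) (Fin q) ℝ) - P) * (Wp * W) := by
  set v := Wpᵀ i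
  have hWWp : W * Wp = 1 := hWp.mul_eq_one_of_rank_eq_card (by rw [hW, Fintype.card_fin])
  have hDWdp : dropRow W i * Wdp = 1 :=
    hWdp.mul_eq_one_of_mul_eq_one (dropRow_mul_submatrix_eq_one hWWp)
  have hv_col : v = Wp *ᵥ Pi.single i 1 := (mulVec_single_one Wp i).symm
  have hWv : W *ᵥ v = Pi.single i 1 := by rw [hv_col, mulVec_mulVec, hWWp, one_mulVec]
  have hv : v ≠ 0 := fun h => by simpa [h] using congr_fun hWv i
  have hGii : GW i i = v ⬝ᵥ v := by
    rw [hGW.eq_of_mul_eq_one (hWp.transpose_mul_self_mul_eq_one hWWp)]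
    rfl
  have hL := isStarProjection_lineProjection hv
  have hJ := hWp.isStarProjection_mul
  have hJL : Wp * W * lineProjection v = lineProjection v :=
    mul_lineProjection_of_mulVec_eq_self (by rw [← mulVec_mulVec, hWv, hv_col])
  have hKL : Wdp * dropRow W i * lineProjection v = 0 := mul_lineProjection_of_mulVec_eq_zero
    (by rw [← mulVec_mulVec, dropRow_mulVec_eq_zero hWv, mulVec_zero])
  have hKJ : Wdp * dropRow W i * (Wp * W) = Wdp * dropRow W i := by
    rw [Matrix.mul_assoc, dropRow_mul_of_mul_eq_self (by rw [← Matrix.mul_assoc, hWp.1])]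
  have hLJ : lineProjection v * (Wp * W) = lineProjection v := by
    simpa only [star_mul, hJ.isSelfAdjoint.star_eq, hL.isSelfAdjoint.star_eq] using
      congr_arg star hJL
  rw [hP, hGii, ← lineProjection, Matrix.sub_mul, Matrix.one_mul, hLJ]
  refine hJ.eq_sub_of_trace_eq hWdp.isStarProjection_mul hL hJL hKJ hKL ?_
  rw [trace_mul_eq_card_of_mul_eq_one hWWp, trace_mul_eq_card_of_mul_eq_one hDWdp,
    trace_lineProjection hv]
  simp

theorem loo_row_space_projection
    {n q : ℕ}
    (W : Matrix (Fin (n + 1)) (Fin q) ℝ) (hW : W.rank = n + 1) (hnq : n + 1 < q)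
    (i : Fin (n + 1))
    (Wp : Matrix (Fin q) (Fin (n + 1)) ℝ) (hWp : IsMPInv W Wp)
    (GW : Matrix (Fin (n + 1)) (Fin (n + 1)) ℝ) (hGW : IsMPInv (W * Wᵀ) GW)
    (Wdp : Matrix (Fin q) (Fin n) ℝ) (hWdp : IsMPInv (dropRow W i) Wdp)
    -- `P_i = (W† e_i e_iᵀ W†ᵀ)/(e_iᵀ G_W e_i)`
    (P : Matrix (Fin q) (Fin q) ℝ)
    (hP : P = (GW i i)⁻¹ • vecMulVec (Wpᵀ i) (Wpᵀ i)) :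
    Wdp * dropRow W i = ((1 : Matrix (Fin q) (Fin q) ℝ) - P) * (Wp * W) :=
  loo_row_space_projection_general W hW i Wp hWp GW hGW Wdp hWdp P hP
end
end

section
/- Let W ∈ ℝ^{n×q} have full row rank (rank(W) = n < q) and T ∈ ℝ^{n×m} have full column rank (rank(T) = m < n), and let y ∈ ℝⁿ. Let β̂_W := (P⊥_T W)† y. Then the in-sample residual satisfies y − P⊥_T W β̂_W = P_T y, i.e., ‖y − P⊥_T W β̂_W‖₂² = yᵀ P_T y. -/
open Matrix BigOperators

noncomputable section

/-- A full row rank matrix has a right inverse. -/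
lemma exists_right_inverse {n q : ℕ} (W : Matrix (Fin n) (Fin q) ℝ)
    (hW : W.rank = n) : ∃ M : Matrix (Fin q) (Fin n) ℝ, W * M = 1 := by
  have hrange : LinearMap.range W.mulVecLin = ⊤ := by
    apply Submodule.eq_top_of_finrank_eq
    rw [← Matrix.rank, hW, Module.finrank_pi]
    simp
  have hsurj : Function.Surjective W.mulVecLin :=
    LinearMap.range_eq_top.mp hrange
  obtain ⟨g, hg⟩ := W.mulVecLin.exists_rightInverse_of_surjective hrange
  refine ⟨LinearMap.toMatrix' g, ?_⟩
  have : (W * LinearMap.toMatrix' g).mulVecLin = (1 : Matrix (Fin n) (Fin n) ℝ).mulVecLin := by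
    rw [Matrix.mulVecLin_mul, Matrix.mulVecLin_one]
    have hgl : (LinearMap.toMatrix' g).mulVecLin = g := by
      ext v
      simp [Matrix.mulVecLin_apply, Matrix.toLin'_apply, ← Matrix.toLin'_apply,
        Matrix.toLin'_toMatrix']
    rw [hgl]
    exact hg
  have hinj : Function.Injective
      (Matrix.mulVecLin : Matrix (Fin n) (Fin n) ℝ → _) := by
    intro A B h
    ext i j
    have := congrFun (congrArg (fun f => f.toFun) h) (Pi.single j 1)
    simpa [Matrix.mulVecLin_apply, Matrix.mulVec_single] using congrFun this i
  exact hinj this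

theorem in_sample_residual_projection
    {n q m : ℕ}
    (y : Fin n → ℝ)
    (W : Matrix (Fin n) (Fin q) ℝ) (T : Matrix (Fin n) (Fin m) ℝ)
    (hW : W.rank = n) (hnq : n < q)
    (hT : T.rank = m) (hmn : m < n)
    -- pseudoinverses `Tp = T†` (so `P_T = T T†`) and `Ap = (P⊥_T W)†`
    (Tp : Matrix (Fin m) (Fin n) ℝ) (hTp : IsMPInv T Tp)
    (Ap : Matrix (Fin q) (Fin n) ℝ)
    (hAp : IsMPInv (((1 : Matrix (Fin n) (Fin n) ℝ) - T * Tp) * W) Ap)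
    -- β̂_W = (P⊥_T W)† y
    (βW : Fin q → ℝ) (hβW : βW = Ap *ᵥ y) :
    y - ((((1 : Matrix (Fin n) (Fin n) ℝ) - T * Tp) * W) *ᵥ βW) = (T * Tp) *ᵥ y ∧
      ∑ i, (y i - ((((1 : Matrix (Fin n) (Fin n) ℝ) - T * Tp) * W) *ᵥ βW) i) ^ 2
        = y ⬝ᵥ ((T * Tp) *ᵥ y) := by
  obtain ⟨M, hM⟩ := exists_right_inverse W hW
  set P : Matrix (Fin n) (Fin n) ℝ := 1 - T * Tp with hPdef
  set A : Matrix (Fin n) (Fin q) ℝ := P * W with hAdef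
  set Q : Matrix (Fin n) (Fin n) ℝ := A * Ap with hQdef
  have hTpT : T * Tp * T = T := hTp.1
  have hTTps : (T * Tp)ᵀ = T * Tp := hTp.2.2.1
  have hPs : Pᵀ = P := by
    rw [hPdef, transpose_sub, transpose_one, hTTps]
  have hPP : P * P = P := by
    rw [hPdef]
    have : T * Tp * (T * Tp) = T * Tp := by
      rw [← Matrix.mul_assoc, hTpT]
    noncomm_ring [this]
  have hQA : Q * A = A := hAp.1
  have hQs : Qᵀ = Q := hAp.2.2.1
  have hPA : P = A * M := by
    rw [hAdef, Matrix.mul_assoc, hM, Matrix.mul_one]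
  have hQP : Q * P = P := by
    rw [hPA, ← Matrix.mul_assoc, hQA]
  have hPQ : P * Q = Q := by
    rw [hQdef, hAdef, ← Matrix.mul_assoc, ← Matrix.mul_assoc, hPP]
  have hQeqP : Q = P := by
    have h1 : Pᵀ * Qᵀ = Pᵀ := by
      rw [← Matrix.transpose_mul]
      exact congrArg transpose hQP
    rw [hPs, hQs] at h1
    rw [← hPQ, h1]
  have hres : y - A *ᵥ βW = (T * Tp) *ᵥ y := by
    rw [hβW, Matrix.mulVec_mulVec, ← hQdef, hQeqP, hPdef,
      Matrix.sub_mulVec, Matrix.one_mulVec]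
    abel
  constructor
  · exact hres
  · have hresfun : ∀ i, y i - (A *ᵥ βW) i = ((T * Tp) *ᵥ y) i := by
      intro i; exact congrFun hres i
    calc ∑ i, (y i - (A *ᵥ βW) i) ^ 2
        = ∑ i, ((T * Tp) *ᵥ y) i * ((T * Tp) *ᵥ y) i := by
          apply Finset.sum_congr rfl
          intro i _
          rw [hresfun i, sq]
      _ = ((T * Tp) *ᵥ y) ⬝ᵥ ((T * Tp) *ᵥ y) := rfl
      _ = y ⬝ᵥ ((T * Tp) *ᵥ y) := by
          rw [Matrix.dotProduct_mulVec, ← Matrix.mulVec_transpose, hTTps,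
            Matrix.mulVec_mulVec, ← Matrix.mul_assoc, hTpT]
          exact dotProduct_comm _ _
end
end
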